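/- Let φ be an Orlicz function taking only finite values, satisfying the Δ₂-condition at zero, and such that ∑_{n=n₁}^∞ φ(1/n) < ∞ for some n₁ ∈ ℕ. Then for every ε > 0 there exists δ > 0 such that for all x ∈ ces_φ with ρ_φ(x) ≥ 1 + ε one has ‖x‖_φ ≥ 1 + δ. -/

import Mathlib

open scoped ENNReal
open Filter

/-- An Orlicz function: `φ : ℝ → [0,∞]` even, convex, left continuous on `ℝ₊`,
continuous at zero, with `φ 0 = 0` and `φ u → ∞` as `u → ∞`. -/
structure OrliczFunction where
  toFun : ℝ → ℝ≥0∞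
  even' : ∀ u : ℝ, toFun (-u) = toFun u
  convex' : ∀ u v t : ℝ, 0 ≤ t → t ≤ 1 →
    toFun (t * u + (1 - t) * v) ≤ ENNReal.ofReal t * toFun u + ENNReal.ofReal (1 - t) * toFun v
  map_zero' : toFun 0 = 0
  leftContinuous' : ∀ t : ℝ, 0 < t → Tendsto toFun (nhdsWithin t (Set.Iio t)) (nhds (toFun t))
  continuousAtZero' : Tendsto toFun (nhds 0) (nhds 0)
  tendsto_top' : Tendsto toFun atTop (nhds ⊤)

/-- The Cesàro mean `σx(n) = (1/n) ∑_{j=1}^n |x j|` (with `0`-based indexing). -/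
noncomputable def cesaroMean (x : ℕ → ℝ) (n : ℕ) : ℝ :=
  (∑ j ∈ Finset.range (n + 1), |x j|) / (n + 1)

/-- The modular `ρ_φ(x) = ∑_i φ(σx(i))`. -/
noncomputable def rho (φ : OrliczFunction) (x : ℕ → ℝ) : ℝ≥0∞ :=
  ∑' n : ℕ, φ.toFun (cesaroMean x n)

/-- The Cesàro–Orlicz sequence space `ces_φ`. -/
def cesOrlicz (φ : OrliczFunction) : Set (ℕ → ℝ) :=
  {x | ∃ lam : ℝ, 0 < lam ∧ rho φ (fun i => lam * x i) < ⊤}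

/-- The Luxemburg norm `‖x‖_φ = inf {λ > 0 : ρ_φ(x/λ) ≤ 1}`. -/
noncomputable def luxNorm (φ : OrliczFunction) (x : ℕ → ℝ) : ℝ :=
  sInf {lam : ℝ | 0 < lam ∧ rho φ (fun i => x i / lam) ≤ 1}

/-- The subspace `A_φ` of `ces_φ`. -/
def Aphi (φ : OrliczFunction) : Set (ℕ → ℝ) :=
  {x | x ∈ cesOrlicz φ ∧ ∀ k : ℝ, 0 < k → ∃ nk : ℕ,
    ∑' n : ℕ, φ.toFun ((k / ((nk + n + 1 : ℕ) : ℝ)) * ∑ i ∈ Finset.range (nk + n + 1), |x i|) < ⊤}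

/-- `∃ n₁, ∑_{n=n₁}^∞ φ(1/n) < ∞`. -/
def TailFinite (φ : OrliczFunction) : Prop :=
  ∃ n₁ : ℕ, ∑' n : ℕ, φ.toFun (((n₁ + n + 1 : ℕ) : ℝ)⁻¹) < ⊤

/-- The `Δ₂`-condition at zero. -/
def Delta2Zero (φ : OrliczFunction) : Prop :=
  ∃ K : ℝ, 0 < K ∧ ∃ a : ℝ, 0 < a ∧ 0 < φ.toFun a ∧
    ∀ u : ℝ, 0 ≤ u → u ≤ a → φ.toFun (2 * u) ≤ ENNReal.ofReal K * φ.toFun u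

/-- `φ` takes only finite values. -/
def FiniteValued (φ : OrliczFunction) : Prop := ∀ u : ℝ, φ.toFun u ≠ ⊤

/-!
If `‖x‖_φ < 1 + δ` then `y = x / (1 + δ)` has `ρ_φ(y) ≤ 1`, so every Cesàro mean of `y` lies in
the sublevel set `{φ ≤ 1}`. That set is bounded and `φ` is finite, so the `Δ₂`-condition at zero
extends to it: `φ (2 u) ≤ C φ u`. Convexity between `u` and `2 u` then gives
`φ ((1 + δ) u) ≤ (1 + δ C) φ u`, hence `ρ_φ(x) ≤ 1 + δ C`, which is `< 1 + ε` for small `δ`.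
-/

namespace OrliczFunction

variable (φ : OrliczFunction)

lemma map_mul_le {t : ℝ} (u : ℝ) (ht0 : 0 ≤ t) (ht1 : t ≤ 1) :
    φ.toFun (t * u) ≤ ENNReal.ofReal t * φ.toFun u := by
  simpa [φ.map_zero'] using φ.convex' u 0 t ht0 ht1

lemma monotoneOn : MonotoneOn φ.toFun (Set.Ici 0) := by
  intro u hu v _ huv
  rcases (Set.mem_Ici.1 hu).trans huv |>.eq_or_lt with hv | hv
  · rw [← hv, le_antisymm (huv.trans hv.ge) hu]
  · have h := φ.map_mul_le v (div_nonneg hu hv.le) ((div_le_one hv).2 huv)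
    rw [div_mul_cancel₀ _ hv.ne'] at h
    exact h.trans (mul_le_of_le_one_left zero_le (ENNReal.ofReal_le_one.2 ((div_le_one hv).2 huv)))

lemma map_one_add_mul_le {C : ℝ≥0∞} {u δ : ℝ} (hu : φ.toFun (2 * u) ≤ C * φ.toFun u)
    (hδ0 : 0 ≤ δ) (hδ1 : δ ≤ 1) :
    φ.toFun ((1 + δ) * u) ≤ (1 + ENNReal.ofReal δ * C) * φ.toFun u := by
  have h := φ.convex' u (2 * u) (1 - δ) (by linarith) (by linarith)
  rw [show (1 - δ) * u + (1 - (1 - δ)) * (2 * u) = (1 + δ) * u by ring, sub_sub_cancel] at h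
  calc φ.toFun ((1 + δ) * u)
      ≤ ENNReal.ofReal (1 - δ) * φ.toFun u + ENNReal.ofReal δ * φ.toFun (2 * u) := h
    _ ≤ 1 * φ.toFun u + ENNReal.ofReal δ * (C * φ.toFun u) := by
        gcongr
        exact ENNReal.ofReal_le_one.2 (by linarith)
    _ = (1 + ENNReal.ofReal δ * C) * φ.toFun u := by ring

lemma exists_forall_le_of_map_le {c : ℝ≥0∞} (hc : c ≠ ⊤) :
    ∃ b : ℝ, ∀ u, 0 ≤ u → φ.toFun u ≤ c → u ≤ b := by
  obtain ⟨b, hcb, hb⟩ := ((φ.tendsto_top'.eventually (lt_mem_nhds hc.lt_top)).and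
    (eventually_ge_atTop 0)).exists
  refine ⟨b, fun u hu hφu => le_of_not_gt fun hbu => ?_⟩
  exact (hcb.trans_le ((φ.monotoneOn hb hu hbu.le).trans hφu)).false

end OrliczFunction

/-- Below `a` this is the `Δ₂`-condition; between `a` and the bound `b` of the sublevel set,
`φ (2 u) ≤ φ (2 b) < ∞` while `φ u ≥ φ a > 0`. -/
lemma Delta2Zero.exists_map_two_mul_le {φ : OrliczFunction} (hΔ : Delta2Zero φ)
    (hfin : FiniteValued φ) {c : ℝ≥0∞} (hc : c ≠ ⊤) :
    ∃ C : ℝ≥0∞, C ≠ ⊤ ∧ ∀ u, 0 ≤ u → φ.toFun u ≤ c → φ.toFun (2 * u) ≤ C * φ.toFun u := by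
  obtain ⟨K, -, a, ha, hφa, hK⟩ := hΔ
  obtain ⟨b, hb⟩ := φ.exists_forall_le_of_map_le hc
  set M := φ.toFun (2 * b)
  refine ⟨ENNReal.ofReal K + M / φ.toFun a,
    ENNReal.add_ne_top.2 ⟨ENNReal.ofReal_ne_top, ENNReal.div_ne_top (hfin _) hφa.ne'⟩,
    fun u hu hφu => ?_⟩
  rcases le_or_gt u a with hua | hau
  · exact (hK u hu hua).trans (mul_le_mul_left le_self_add _)
  · calc φ.toFun (2 * u) ≤ M :=
          φ.monotoneOn (Set.mem_Ici.2 (by linarith)) (Set.mem_Ici.2 (by linarith [hb u hu hφu]))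
            (by linarith [hb u hu hφu])
      _ = M / φ.toFun a * φ.toFun a := (ENNReal.div_mul_cancel hφa.ne' (hfin a)).symm
      _ ≤ M / φ.toFun a * φ.toFun u := by gcongr; exact φ.monotoneOn ha.le hu hau.le
      _ ≤ (ENNReal.ofReal K + M / φ.toFun a) * φ.toFun u := by gcongr; exact le_add_self

lemma cesaroMean_nonneg (x : ℕ → ℝ) (n : ℕ) : 0 ≤ cesaroMean x n := by
  unfold cesaroMean
  positivity

lemma cesaroMean_const_mul {c : ℝ} (hc : 0 ≤ c) (x : ℕ → ℝ) (n : ℕ) :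
    cesaroMean (fun i => c * x i) n = c * cesaroMean x n := by
  simp only [cesaroMean, abs_mul, abs_of_nonneg hc, ← Finset.mul_sum, mul_div_assoc]

lemma rho_const_mul_le (φ : OrliczFunction) {t : ℝ} (ht0 : 0 ≤ t) (ht1 : t ≤ 1) (x : ℕ → ℝ) :
    rho φ (fun i => t * x i) ≤ ENNReal.ofReal t * rho φ x := by
  rw [rho, rho, ← ENNReal.tsum_mul_left]
  refine ENNReal.tsum_le_tsum fun n => ?_
  rw [cesaroMean_const_mul ht0]
  exact φ.map_mul_le _ ht0 ht1

lemma exists_rho_div_le_one {φ : OrliczFunction} {x : ℕ → ℝ} (hx : x ∈ cesOrlicz φ) :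
    ∃ lam : ℝ, 0 < lam ∧ rho φ (fun i => x i / lam) ≤ 1 := by
  obtain ⟨μ, hμ, hR⟩ := hx
  set R := rho φ (fun i => μ * x i)
  set t := min 1 (R.toReal + 1)⁻¹
  have ht0 : 0 < t := lt_min one_pos (by positivity)
  refine ⟨(t * μ)⁻¹, by positivity, ?_⟩
  have hscale : (fun i => x i / (t * μ)⁻¹) = fun i => t * (μ * x i) := by
    funext i
    rw [div_inv_eq_mul]
    ring
  have htR : t * R.toReal ≤ 1 := by
    calc t * R.toReal ≤ (R.toReal + 1)⁻¹ * R.toReal := by gcongr; exact min_le_right _ _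
      _ ≤ 1 := by rw [inv_mul_le_one₀ (by positivity)]; linarith
  calc rho φ (fun i => x i / (t * μ)⁻¹) ≤ ENNReal.ofReal t * R :=
        hscale ▸ rho_const_mul_le φ ht0.le (min_le_left _ _) _
    _ = ENNReal.ofReal (t * R.toReal) := by
        rw [ENNReal.ofReal_mul ht0.le, ENNReal.ofReal_toReal hR.ne]
    _ ≤ 1 := ENNReal.ofReal_le_one.2 htR

lemma rho_div_le_one_of_luxNorm_lt {φ : OrliczFunction} {x : ℕ → ℝ} (hx : x ∈ cesOrlicz φ)
    {lam : ℝ} (hlam : luxNorm φ x < lam) : rho φ (fun i => x i / lam) ≤ 1 := by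
  obtain ⟨lam₀, ⟨hlam₀, hρ₀⟩, hlt⟩ := exists_lt_of_csInf_lt (exists_rho_div_le_one hx) hlam
  have hratio : lam₀ / lam ≤ 1 := (div_le_one (hlam₀.trans hlt)).2 hlt.le
  have hscale : (fun i => x i / lam) = fun i => lam₀ / lam * (x i / lam₀) := by
    funext i
    field_simp
  calc rho φ (fun i => x i / lam) ≤ ENNReal.ofReal (lam₀ / lam) * rho φ (fun i => x i / lam₀) :=
        hscale ▸ rho_const_mul_le φ (div_pos hlam₀ (hlam₀.trans hlt)).le hratio _
    _ ≤ 1 * 1 := by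
        gcongr
        exact ENNReal.ofReal_le_one.2 hratio
    _ = 1 := one_mul 1

lemma rho_le_one_add_of_rho_div_le_one {φ : OrliczFunction} {C : ℝ≥0∞}
    (hC : ∀ u, 0 ≤ u → φ.toFun u ≤ 1 → φ.toFun (2 * u) ≤ C * φ.toFun u)
    {x : ℕ → ℝ} {δ : ℝ} (hδ0 : 0 ≤ δ) (hδ1 : δ ≤ 1)
    (hx : rho φ (fun i => x i / (1 + δ)) ≤ 1) :
    rho φ x ≤ 1 + ENNReal.ofReal δ * C := by
  set y : ℕ → ℝ := fun i => x i / (1 + δ)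
  have hxy : x = fun i => (1 + δ) * y i := by
    have : 1 + δ ≠ 0 := by linarith
    funext i
    simp only [y]
    field_simp
  calc rho φ x = ∑' n, φ.toFun ((1 + δ) * cesaroMean y n) := by
        rw [hxy, rho]
        simp only [cesaroMean_const_mul (by linarith : (0 : ℝ) ≤ 1 + δ)]
    _ ≤ ∑' n, (1 + ENNReal.ofReal δ * C) * φ.toFun (cesaroMean y n) :=
        ENNReal.tsum_le_tsum fun n => φ.map_one_add_mul_le
          (hC _ (cesaroMean_nonneg y n) ((ENNReal.le_tsum n).trans hx)) hδ0 hδ1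
    _ = (1 + ENNReal.ofReal δ * C) * rho φ y := ENNReal.tsum_mul_left
    _ ≤ 1 + ENNReal.ofReal δ * C := mul_le_of_le_one_right zero_le hx

lemma ENNReal.exists_ofReal_mul_lt {C : ℝ≥0∞} (hC : C ≠ ⊤) {ε : ℝ} (hε : 0 < ε) :
    ∃ δ : ℝ, 0 < δ ∧ δ ≤ 1 ∧ ENNReal.ofReal δ * C < ENNReal.ofReal ε := by
  have hlim : Tendsto (fun δ => ENNReal.ofReal δ * C) (nhdsWithin 0 (Set.Ioi 0)) (nhds 0) := by
    simpa using ENNReal.Tendsto.mul_const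
      (ENNReal.tendsto_ofReal (tendsto_nhdsWithin_of_tendsto_nhds (tendsto_id (x := nhds 0))))
      (Or.inr hC)
  obtain ⟨δ, hδε, hδ1, hδ0⟩ := ((hlim.eventually (gt_mem_nhds (ENNReal.ofReal_pos.2 hε))).and
    ((eventually_le_nhds one_pos).filter_mono nhdsWithin_le_nhds |>.and
      self_mem_nhdsWithin)).exists
  exact ⟨δ, hδ0, hδ1, hδε⟩

theorem stmt_12_general (φ : OrliczFunction) (hfin : FiniteValued φ) (hδ : Delta2Zero φ) :
    ∀ ε : ℝ, 0 < ε → ∃ δ : ℝ, 0 < δ ∧ ∀ x ∈ cesOrlicz φ,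
      1 + ENNReal.ofReal ε ≤ rho φ x → 1 + δ ≤ luxNorm φ x := by
  obtain ⟨C, hCtop, hC⟩ := hδ.exists_map_two_mul_le hfin ENNReal.one_ne_top
  intro ε hε
  obtain ⟨δ, hδ0, hδ1, hδε⟩ := ENNReal.exists_ofReal_mul_lt hCtop hε
  refine ⟨δ, hδ0, fun x hx hρx => le_of_not_gt fun hlt => ?_⟩
  have hρ := rho_le_one_add_of_rho_div_le_one hC hδ0.le hδ1 (rho_div_le_one_of_luxNorm_lt hx hlt)
  exact (hρx.trans hρ).not_gt (ENNReal.add_lt_add_left ENNReal.one_ne_top hδε)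

/-- if `φ ∈ Δ₂(0)` then for any `ε > 0` there is `δ > 0` with
`‖x‖_φ ≥ 1 + δ` whenever `ρ_φ(x) ≥ 1 + ε`. -/
theorem stmt_12 (φ : OrliczFunction) (hfin : FiniteValued φ) (hδ : Delta2Zero φ)
    (htail : TailFinite φ) :
    ∀ ε : ℝ, 0 < ε → ∃ δ : ℝ, 0 < δ ∧ ∀ x ∈ cesOrlicz φ,
      1 + ENNReal.ofReal ε ≤ rho φ x → 1 + δ ≤ luxNorm φ x :=
  stmt_12_general φ hfin hδ
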